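/- arXiv:1904.06057 — 7 statements merged into one kernel-verified Lean document; each statement's English description precedes it below -/
import Mathlib

section
/- Euler's pentagonal number theorem, restated via the trefoil sign sequence: define ε : ℕ → ℤ by ε(m) = -1 if m ≡ 1 or 11 (mod 12), ε(m) = +1 if m ≡ 5 or 7 (mod 12), and ε(m) = 0 otherwise. Then as formal power series in q, ∑_{m ≥ 1} ε(m) · q^{(m² − 1)/24} = −∏_{n ≥ 1} (1 − qⁿ). (Note (m² − 1)/24 is a nonnegative integer whenever ε(m) ≠ 0.) -/
/-!
Mathlib's pentagonal number theorem gives `∏ (1 - qⁿ) = ∑_{j ∈ ℤ} (-1)^j q^{j(3j-1)/2}`,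
and the coefficient of `q^k` of the infinite product is already that of `∏_{n ≤ k} (1 - qⁿ)`.
The substitution `m = |6j - 1|` turns `24 · j(3j-1)/2 + 1` into `m²`; it hits exactly the
`m` with `m² ≡ 1 (mod 6)`, and the trefoil sign is `ε(|6j - 1|) = -(-1)^j`.
-/

open PowerSeries

/-- The sign sequence of the trefoil: `-1` if `m ≡ 1, 11 (mod 12)`,
`+1` if `m ≡ 5, 7 (mod 12)`, and `0` otherwise. -/
def trefEps (m : ℕ) : ℤ :=
  if m % 12 = 1 ∨ m % 12 = 11 then -1
  else if m % 12 = 5 ∨ m % 12 = 7 then 1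
  else 0

namespace PowerSeries

variable {R : Type*} [CommRing R]

theorem coeff_mul_prod_one_sub_X_pow_of_lt {ι : Type*} (f : R⟦X⟧) {k : ℕ} (s : Finset ι)
    (e : ι → ℕ) (hs : ∀ i ∈ s, k < e i) :
    coeff k (f * ∏ i ∈ s, (1 - X ^ e i)) = coeff k f := by
  classical
  induction s using Finset.induction_on with
  | empty => simp
  | insert a s ha ih =>
    rw [Finset.prod_insert ha, mul_left_comm, sub_mul, one_mul, map_sub, X_pow_mul,
      coeff_mul_X_pow', if_neg (by grind), sub_zero,
      ih fun i hi ↦ hs i (Finset.mem_insert_of_mem hi)]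

theorem coeff_prod_Icc_one_sub_X_pow (k : ℕ) :
    coeff k (∏ n ∈ Finset.Icc 1 k, (1 - X ^ n : R⟦X⟧)) = coeff k (pentagonalSeries R) := by
  classical
  obtain ⟨s₀, hs₀⟩ := Filter.eventually_atTop.mp (coeff_prod_one_sub_X_pow_eventually_eq R k)
  have hsub : Finset.range k ⊆ s₀ ∪ Finset.range k := Finset.subset_union_right
  rw [← hs₀ _ Finset.subset_union_left, ← Finset.prod_sdiff hsub, mul_comm,
    coeff_mul_prod_one_sub_X_pow_of_lt _ _ _ (fun n hn ↦ by grind),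
    Finset.range_eq_Ico, Finset.prod_Ico_add' (fun n ↦ (1 - X ^ n : R⟦X⟧)) 0 k 1]
  rfl

end PowerSeries

theorem sq_natAbs_six_mul_sub_one (j : ℤ) : (6 * j - 1).natAbs ^ 2 = 24 * pentagonal j + 1 := by
  have := two_mul_natCast_pentagonal j
  zify
  rw [sq_abs]
  linear_combination -12 * this

theorem exists_natAbs_six_mul_sub_one_eq {m : ℕ} (h : m ^ 2 % 6 = 1) :
    ∃ j : ℤ, (6 * j - 1).natAbs = m := by
  have hm : m % 6 = 1 ∨ m % 6 = 5 := by
    have := Nat.pow_mod m 2 6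
    have : m % 6 < 6 := Nat.mod_lt _ (by norm_num)
    interval_cases h' : m % 6 <;> simp_all
  rcases hm with hm | hm
  · exact ⟨-((m / 6 : ℕ) : ℤ), by omega⟩
  · exact ⟨((m / 6 + 1 : ℕ) : ℤ), by omega⟩

theorem trefEps_natAbs_six_mul_sub_one (j : ℤ) :
    trefEps (6 * j - 1).natAbs = -(j.negOnePow : ℤ) := by
  rcases j.even_or_odd with ⟨c, rfl⟩ | ⟨c, rfl⟩
  · rw [Int.negOnePow_even _ ⟨c, rfl⟩, trefEps, if_pos (by omega)]; rfl
  · rw [Int.negOnePow_odd _ ⟨c, rfl⟩, trefEps, if_neg (by omega), if_pos (by omega)]; rfl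

theorem exists_pentagonal_of_sq_eq {m k : ℕ} (h : m ^ 2 = 24 * k + 1) :
    ∃ j : ℤ, pentagonal j = k ∧ (6 * j - 1).natAbs = m := by
  obtain ⟨j, rfl⟩ := exists_natAbs_six_mul_sub_one_eq (m := m) (by omega)
  exact ⟨j, by have := sq_natAbs_six_mul_sub_one j; omega, rfl⟩

/-- Euler's pentagonal number theorem, restated via the trefoil sign sequence:
as formal power series in `q`, `∑_{m ≥ 1} ε(m) q^((m²−1)/24) = −∏_{n ≥ 1} (1 − qⁿ)`.
Both sides are compared coefficientwise; the coefficient of `q^k` in the infinite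
product is the coefficient of `q^k` in the finite product `∏_{n=1}^{k} (1 − qⁿ)`,
since the further factors do not affect degrees `≤ k`. -/
theorem pentagonal_via_trefoil_eps (k : ℕ) :
    (∑ m ∈ Finset.range (24 * k + 2), if m ^ 2 = 24 * k + 1 then trefEps m else 0)
      = - (PowerSeries.coeff k)
          (∏ n ∈ Finset.Icc 1 k, (1 - (X : PowerSeries ℤ) ^ n)) := by
  rw [coeff_prod_Icc_one_sub_X_pow]
  by_cases hk : k ∈ Set.range pentagonal
  · obtain ⟨j, rfl⟩ := hk
    have hsq := sq_natAbs_six_mul_sub_one j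
    have hlt : (6 * j - 1).natAbs < 24 * pentagonal j + 2 := by
      have := Nat.le_self_pow two_ne_zero (6 * j - 1).natAbs
      omega
    rw [Finset.sum_eq_single_of_mem _ (Finset.mem_range.mpr hlt)
        fun m _ hm ↦ if_neg fun h ↦ hm (Nat.pow_left_injective two_ne_zero (h.trans hsq.symm)),
      if_pos hsq, coeff_pentagonalSeries_pentagonal, trefEps_natAbs_six_mul_sub_one, Int.cast_id]
  · rw [coeff_pentagonalSeries_eq_zero ℤ hk, neg_zero]
    refine Finset.sum_eq_zero fun m _ ↦ if_neg fun h ↦ hk ?_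
    obtain ⟨j, hj, -⟩ := exists_pentagonal_of_sq_eq h
    exact ⟨j, hj⟩
end

section
/- Let s, t > 1 be coprime integers and define ε : ℕ → ℤ by ε(m) = −1 if m ≡ st+s+t or st−s−t (mod 2st), ε(m) = +1 if m ≡ st+s−t or st−s+t (mod 2st), and 0 otherwise. Then, as formal power series in z, (z^{2st} − 1) · ∑_{m ≥ 1} ε(m) zᵐ = z^{st−s−t}(1 − z^{2s})(1 − z^{2t}). -/
open PowerSeries

/-- The torus-knot sign sequence for coprime `s, t > 1`:
`ε(m) = −1` if `m ≡ st+s+t` or `st−s−t (mod 2st)`,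
`ε(m) = +1` if `m ≡ st+s−t` or `st−s+t (mod 2st)`, and `0` otherwise. -/
def torusEps (s t m : ℕ) : ℤ :=
  if m % (2*s*t) = (s*t + s + t) % (2*s*t) ∨ m % (2*s*t) = (s*t - s - t) % (2*s*t) then -1
  else if m % (2*s*t) = (s*t + s - t) % (2*s*t) ∨ m % (2*s*t) = (s*t - s + t) % (2*s*t) then 1
  else 0

/-!
Since `ε` has period `2st`, multiplying its generating series by `z^{2st} − 1` cancels every
coefficient beyond the first period and leaves minus the first period itself. Because
`0 < st − s − t` and `st + s + t < 2st`, the four residues `st ± s ± t` lie in `[0, 2st)`, and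
they are distinct once `s ≠ t`; so that period is
`z^{st+s−t} + z^{st−s+t} − z^{st−s−t} − z^{st+s+t}`, which is `−z^{st−s−t}(1 − z^{2s})(1 − z^{2t})`.
-/

theorem Nat.add_lt_mul_of_ne {s t : ℕ} (hs : 1 < s) (ht : 1 < t) (hne : s ≠ t) :
    s + t < s * t := by
  rcases Nat.lt_or_gt_of_ne hne with h | h <;> nlinarith

theorem PowerSeries.X_pow_sub_one_mul_mk_of_periodic {R : Type*} [CommRing R] {f : ℕ → R}
    {N : ℕ} (hf : ∀ m, f (m + N) = f m) :
    ((X : R⟦X⟧) ^ N - 1) * mk f = -(trunc N (mk f) : R⟦X⟧) := by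
  ext n
  rw [sub_mul, one_mul, map_sub, coeff_X_pow_mul', map_neg, Polynomial.coeff_coe, coeff_trunc,
    coeff_mk]
  rcases lt_or_ge n N with hn | hn
  · simp [hn, not_le.mpr hn]
  · obtain ⟨m, rfl⟩ := Nat.exists_eq_add_of_le' hn
    simp [hf]

theorem torusEps_add_period (s t m : ℕ) : torusEps s t (m + 2*s*t) = torusEps s t m := by
  simp only [torusEps, Nat.add_mod_right]

theorem torusEps_of_lt {s t n : ℕ} (hs : 1 < s) (ht : 1 < t) (hne : s ≠ t) (hn : n < 2*s*t) :
    torusEps s t n =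
      (if n = s*t + s - t then 1 else 0) + (if n = s*t - s + t then 1 else 0)
        - (if n = s*t - s - t then 1 else 0) - (if n = s*t + s + t then 1 else 0) := by
  have hst := Nat.add_lt_mul_of_ne hs ht hne
  unfold torusEps
  rw [show 2*s*t = 2*(s*t) by ring] at hn ⊢
  generalize s*t = P at *
  have hmod : ∀ k < 2*P, k % (2*P) = k := fun k hk => Nat.mod_eq_of_lt hk
  rw [hmod n hn, hmod (P + s + t) (by omega), hmod (P - s - t) (by omega),
    hmod (P + s - t) (by omega), hmod (P - s + t) (by omega)]
  split_ifs <;> omega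

theorem trunc_mk_torusEps {s t : ℕ} (hs : 1 < s) (ht : 1 < t) (hne : s ≠ t) :
    trunc (2*s*t) (mk fun m => torusEps s t m) =
      Polynomial.X ^ (s*t + s - t) + Polynomial.X ^ (s*t - s + t)
        - Polynomial.X ^ (s*t - s - t) - Polynomial.X ^ (s*t + s + t) := by
  ext n
  simp only [coeff_trunc, coeff_mk, Polynomial.coeff_add, Polynomial.coeff_sub,
    Polynomial.coeff_X_pow]
  by_cases hn : n < 2*s*t
  · rw [if_pos hn, torusEps_of_lt hs ht hne hn]
  · have hst := Nat.add_lt_mul_of_ne hs ht hne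
    rw [if_neg hn]
    rw [show 2*s*t = 2*(s*t) by ring] at hn
    generalize s*t = P at *
    split_ifs <;> omega

/-- For coprime `s, t > 1`, as formal power series in `z`,
`(z^{2st} − 1) · ∑_{m ≥ 1} ε(m) zᵐ = z^{st−s−t}(1 − z^{2s})(1 − z^{2t})`. -/
theorem torus_eps_generating_function (s t : ℕ) (hs : 1 < s) (ht : 1 < t)
    (hst : Nat.Coprime s t) :
    ((X : PowerSeries ℤ) ^ (2*s*t) - 1) * PowerSeries.mk (fun m => torusEps s t m)
      = X ^ (s*t - s - t) * ((1 - X ^ (2*s)) * (1 - X ^ (2*t))) := by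
  have hne : s ≠ t := by
    rintro rfl
    simp only [Nat.coprime_self] at hst
    omega
  have hlt : s + t < s * t := Nat.add_lt_mul_of_ne hs ht hne
  rw [X_pow_sub_one_mul_mk_of_periodic (torusEps_add_period s t), trunc_mk_torusEps hs ht hne]
  obtain ⟨k, hk⟩ : ∃ k, s*t - s - t = k := ⟨_, rfl⟩
  rw [show s*t + s - t = k + 2*s by omega, show s*t - s + t = k + 2*t by omega,
    show s*t + s + t = k + 2*s + 2*t by omega, hk]
  push_cast
  ring
end

section
/- Habiro's two formulas for the colored Jones polynomial of the left-handed trefoil agree: for every integer n ≥ 1, ∑_{m ≥ 0} qᵐ (q^{n+1}; q)_m (q^{1−n}; q)_m = q^{n−1} ∑_{m ≥ 0} q^{mn} (q^{n−m}; q)_m, as Laurent polynomials in q. Both sums are finite: on the left the terms vanish for m ≥ n because (q^{1−n}; q)_m contains the factor (1 − q^{1−n}q^{n−1}) = 0, and on the right the terms vanish for m ≥ n because (q^{n−m}; q)_m contains the factor 1 − q⁰ = 0. -/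
/-!
Creative telescoping. Writing `Jₙ` for either side, both satisfy the first-order recurrence
`(1 - q^{n+1}) J_{n+1} + q^{3n+2} (1 - q^n) Jₙ = qⁿ (1 - q^{2n+1})`: for each side, the
corresponding combination of the summands telescopes in `m` against an explicit certificate,
which vanishes at `m = n + 1` because it carries a factor `(q^{-k}; q)_{k+1}`. Both sides are
`1` at `n = 1`, and `1 - q^{n+1}` is not a zero divisor, so they agree for all `n`. The
computation is carried out in the fraction field of `ℤ[q, q⁻¹]`, where `q` is not a root of unity.
-/

open LaurentPolynomial Finset

lemma mul_sum_range_succ_add_mul_sum_range_eq_sub {R : Type*} [Ring R] {G : ℕ → R}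
    {f : ℕ → ℕ → R} {a b : R} {n : ℕ}
    (hf : f n n = 0) (hG : ∀ m, a * f (n + 1) m + b * f n m = G (m + 1) - G m) :
    a * ∑ m ∈ range (n + 1), f (n + 1) m + b * ∑ m ∈ range n, f n m = G (n + 1) - G 0 := by
  rw [← add_zero (∑ m ∈ range n, f n m), ← hf, ← sum_range_succ, mul_sum, mul_sum,
    ← sum_add_distrib, ← sum_range_sub]
  exact sum_congr rfl fun m _ ↦ hG m

section QPochhammer

variable {F : Type*} [Field F]

/-- `qPoch x a m` is the `q`-Pochhammer symbol `(x^a; x)_m`. -/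
noncomputable def qPoch (x : F) (a : ℤ) (m : ℕ) : F :=
  ∏ j ∈ range m, (1 - x ^ (a + j))

@[simp] lemma qPoch_zero (x : F) (a : ℤ) : qPoch x a 0 = 1 := prod_range_zero _

lemma qPoch_succ (x : F) (a : ℤ) (m : ℕ) :
    qPoch x a (m + 1) = qPoch x a m * (1 - x ^ (a + m)) :=
  prod_range_succ _ _

lemma qPoch_succ' (x : F) (a : ℤ) (m : ℕ) :
    qPoch x a (m + 1) = (1 - x ^ a) * qPoch x (a + 1) m := by
  rw [qPoch, prod_range_succ', mul_comm, qPoch]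
  push_cast
  simp only [add_assoc, add_comm (1 : ℤ), add_zero]

lemma one_sub_zpow_mul_qPoch_add_one (x : F) (a : ℤ) (m : ℕ) :
    (1 - x ^ a) * qPoch x (a + 1) m = qPoch x a m * (1 - x ^ (a + m)) := by
  rw [← qPoch_succ, qPoch_succ']

lemma qPoch_eq_zero {x : F} {a : ℤ} {m : ℕ} (ha : a ≤ 0) (hm : 0 < a + m) : qPoch x a m = 0 :=
  prod_eq_zero (i := (-a).toNat) (mem_range.2 (by omega))
    (by rw [show a + ((-a).toNat : ℕ) = 0 by omega, zpow_zero, sub_self])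

end QPochhammer

section Trefoil

variable {F : Type*} [Field F]

noncomputable def cyclotomicTerm (x : F) (n m : ℕ) : F :=
  x ^ (m : ℤ) * (qPoch x (n + 1) m * qPoch x (1 - n) m)

noncomputable def habiroTerm (x : F) (n m : ℕ) : F :=
  x ^ ((n : ℤ) - 1 + m * n) * qPoch x (n - m) m

noncomputable def cyclotomicCertificate (x : F) (n m : ℕ) : F :=
  -x ^ n * (1 - x ^ (2 * n + 1)) * (qPoch x (n + 1) m * qPoch x (-n) m)

noncomputable def habiroCertificate (x : F) (n m : ℕ) : F :=
  (x ^ (2 * n + 1) - x ^ m) * x ^ (n * (m + 1)) * qPoch x (n + 1 - m) m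

lemma cyclotomicTerm_telescope {x : F} (hx : x ≠ 0) (n m : ℕ) :
    (1 - x ^ (n + 1)) * cyclotomicTerm x (n + 1) m
        + x ^ (3 * n + 2) * (1 - x ^ n) * cyclotomicTerm x n m
      = cyclotomicCertificate x n (m + 1) - cyclotomicCertificate x n m := by
  have h₁ := one_sub_zpow_mul_qPoch_add_one x (n + 1) m
  have h₂ := one_sub_zpow_mul_qPoch_add_one x (-n) m
  rw [neg_add_eq_sub] at h₂
  -- `h₁` and `h₂` turn every product into a multiple of `qPoch x (n + 1) m * qPoch x (-n) m`.
  simp only [cyclotomicTerm, cyclotomicCertificate, qPoch_succ]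
  push_cast
  rw [show (1 : ℤ) - (n + 1) = -n by ring]
  linear_combination (norm := skip)
    x ^ (m : ℤ) * qPoch x (-n) m * h₁
      - x ^ (3 * n + 2) * x ^ n * x ^ (m : ℤ) * qPoch x (n + 1) m * h₂
  simp only [zpow_add₀ hx, zpow_neg, zpow_natCast, zpow_one]
  field_simp
  ring

lemma habiroTerm_telescope {x : F} (hx : x ≠ 0) (n m : ℕ) :
    (1 - x ^ (n + 1)) * habiroTerm x (n + 1) m
        + x ^ (3 * n + 2) * (1 - x ^ n) * habiroTerm x n m
      = habiroCertificate x n (m + 1) - habiroCertificate x n m := by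
  have h := one_sub_zpow_mul_qPoch_add_one x (n - m) m
  rw [sub_add_cancel] at h
  -- `h` turns every product into a multiple of `qPoch x (n - m + 1) m`.
  simp only [habiroTerm, habiroCertificate]
  push_cast
  rw [show (n : ℤ) + 1 - (m + 1) = n - m by ring, show (n : ℤ) + 1 - m = n - m + 1 by ring,
    qPoch_succ x (n - m) m, sub_add_cancel]
  linear_combination (norm := skip)
    ((x ^ (2 * n + 1) - x ^ (m + 1)) * x ^ (n * (m + 1 + 1))
      - x ^ (3 * n + 2) * x ^ ((n : ℤ) - 1 + m * n)) * h
  simp only [mul_add, mul_one, zpow_add₀ hx, zpow_sub₀ hx, zpow_natCast, zpow_one, zpow_mul]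
  field_simp
  ring

lemma sum_cyclotomicTerm_recurrence {x : F} (hx : x ≠ 0) {n : ℕ} (hn : 0 < n) :
    (1 - x ^ (n + 1)) * ∑ m ∈ range (n + 1), cyclotomicTerm x (n + 1) m
        + x ^ (3 * n + 2) * (1 - x ^ n) * ∑ m ∈ range n, cyclotomicTerm x n m
      = x ^ n * (1 - x ^ (2 * n + 1)) := by
  have hlast : cyclotomicTerm x n n = 0 := by
    rw [cyclotomicTerm, qPoch_eq_zero (a := 1 - n) (by omega) (by omega), mul_zero, mul_zero]
  rw [mul_sum_range_succ_add_mul_sum_range_eq_sub hlast (cyclotomicTerm_telescope hx n),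
    cyclotomicCertificate, cyclotomicCertificate, qPoch_eq_zero (a := -n) (by omega) (by omega),
    qPoch_zero, qPoch_zero]
  ring

lemma sum_habiroTerm_recurrence {x : F} (hx : x ≠ 0) {n : ℕ} (hn : 0 < n) :
    (1 - x ^ (n + 1)) * ∑ m ∈ range (n + 1), habiroTerm x (n + 1) m
        + x ^ (3 * n + 2) * (1 - x ^ n) * ∑ m ∈ range n, habiroTerm x n m
      = x ^ n * (1 - x ^ (2 * n + 1)) := by
  have hlast : habiroTerm x n n = 0 := by
    rw [habiroTerm, qPoch_eq_zero (a := n - n) (by omega) (by omega), mul_zero]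
  rw [mul_sum_range_succ_add_mul_sum_range_eq_sub hlast (habiroTerm_telescope hx n),
    habiroCertificate, habiroCertificate,
    qPoch_eq_zero (a := n + 1 - (n + 1 : ℕ)) (by omega) (by omega), qPoch_zero]
  ring

theorem sum_cyclotomicTerm_eq_sum_habiroTerm {x : F} (hx₀ : x ≠ 0) (hx : ¬IsOfFinOrder x)
    (n : ℕ) : ∑ m ∈ range n, cyclotomicTerm x n m = ∑ m ∈ range n, habiroTerm x n m := by
  induction n with
  | zero => simp
  | succ n ih =>
    obtain rfl | hn := n.eq_zero_or_pos
    · simp [cyclotomicTerm, habiroTerm]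
    have hx' : 1 - x ^ (n + 1) ≠ 0 := sub_ne_zero.2 fun h ↦
      hx (isOfFinOrder_iff_pow_eq_one.2 ⟨n + 1, n.succ_pos, h.symm⟩)
    apply mul_left_cancel₀ hx'
    linear_combination sum_cyclotomicTerm_recurrence hx₀ hn - sum_habiroTerm_recurrence hx₀ hn
      - x ^ (3 * n + 2) * (1 - x ^ n) * ih

end Trefoil

lemma map_T_eq_zpow {R K : Type*} [Semiring R] [DivisionRing K] (θ : R[T;T⁻¹] →+* K) (k : ℤ) :
    θ (T k) = θ (T 1) ^ k := by
  have hpow (n : ℕ) : θ (T n) = θ (T 1) ^ n := by rw [← map_pow, T_pow, mul_one]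
  obtain ⟨n, rfl | rfl⟩ := k.eq_nat_or_neg
  · rw [zpow_natCast, hpow]
  · rw [zpow_neg, zpow_natCast, ← hpow]
    refine eq_inv_of_mul_eq_one_left ?_
    rw [← map_mul, ← T_add, neg_add_cancel, T_zero, map_one]

lemma not_isOfFinOrder_map_T_one {R K : Type*} [Semiring R] [Nontrivial R] [DivisionRing K]
    {θ : R[T;T⁻¹] →+* K} (hθ : Function.Injective θ) : ¬IsOfFinOrder (θ (T 1)) := by
  rw [isOfFinOrder_iff_pow_eq_one]
  rintro ⟨n, hn, h⟩
  rw [← map_pow, T_pow, mul_one, ← map_one θ, ← T_zero] at h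
  exact hn.ne' (by exact_mod_cast (AddMonoidAlgebra.single_left_inj one_ne_zero).1 (hθ h))

theorem trefoil_cyclotomic_eq_habiro_general (n : ℕ) :
    (∑ m ∈ Finset.range n, (T (m : ℤ) : LaurentPolynomial ℤ) *
        ((∏ j ∈ Finset.range m, (1 - T ((n : ℤ) + 1 + (j : ℤ)))) *
         (∏ j ∈ Finset.range m, (1 - T (1 - (n : ℤ) + (j : ℤ))))))
      = T ((n : ℤ) - 1) * ∑ m ∈ Finset.range n,
          T ((m : ℤ) * (n : ℤ)) * ∏ j ∈ Finset.range m, (1 - T ((n : ℤ) - (m : ℤ) + (j : ℤ))) := by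
  set θ := algebraMap ℤ[T;T⁻¹] (FractionRing ℤ[T;T⁻¹])
  have hθ : Function.Injective θ := IsFractionRing.injective _ _
  obtain ⟨x, hx⟩ : ∃ x, θ (T 1) = x := ⟨_, rfl⟩
  have hT (k : ℤ) : θ (T k) = x ^ k := hx ▸ map_T_eq_zpow θ k
  have hx₀ : x ≠ 0 := hx ▸ ((isUnit_T 1).map θ).ne_zero
  have key := sum_cyclotomicTerm_eq_sum_habiroTerm hx₀ (hx ▸ not_isOfFinOrder_map_T_one hθ) n
  apply hθ
  simp only [cyclotomicTerm, habiroTerm, qPoch] at key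
  simpa only [map_sum, map_mul, map_prod, map_sub, map_one, hT, mul_sum, ← mul_assoc,
    ← zpow_add₀ hx₀] using key

/-- Habiro's two formulas for the colored Jones polynomial of the left-handed trefoil agree:
for every `n ≥ 1`, in `ℤ[q, q⁻¹]`,
`∑_{m=0}^{n−1} qᵐ (q^{n+1}; q)_m (q^{1−n}; q)_m = q^{n−1} ∑_{m=0}^{n−1} q^{mn} (q^{n−m}; q)_m`,
where `(x; q)_m = ∏_{j=0}^{m−1} (1 − x qʲ)`. (Both sums are restricted to `m < n` since
the remaining terms vanish.) -/
theorem trefoil_cyclotomic_eq_habiro (n : ℕ) (hn : 1 ≤ n) :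
    (∑ m ∈ Finset.range n, (T (m : ℤ) : LaurentPolynomial ℤ) *
        ((∏ j ∈ Finset.range m, (1 - T ((n : ℤ) + 1 + (j : ℤ)))) *
         (∏ j ∈ Finset.range m, (1 - T (1 - (n : ℤ) + (j : ℤ))))))
      = T ((n : ℤ) - 1) * ∑ m ∈ Finset.range n,
          T ((m : ℤ) * (n : ℤ)) * ∏ j ∈ Finset.range m, (1 - T ((n : ℤ) - (m : ℤ) + (j : ℤ))) :=
  trefoil_cyclotomic_eq_habiro_general n
end

section
/- The closed-form coefficients of the trefoil series satisfy the quantum A-polynomial recursion: define, for odd m ≥ 1, f_m = ε_m · q^{(m²+23)/24} where ε_m = −1 if m ≡ 1, 11 (mod 12), ε_m = +1 if m ≡ 5, 7 (mod 12), ε_m = 0 otherwise (and f_m = 0 for even m). Then for every odd m ≥ 1: (1 − q^{(m+9)/2}) · f_{m+10} = q³ · [ f_m · ( q^{(m+3)/2} − q^{m+2} ) + f_{m+4} · ( q^{m+5} − q^{(m+1)/2} ) + f_{m+6} · ( 1 − q^{(m+1)/2} ) ], as an identity in the ring of Puiseux polynomials in q (all exponents lie in (1/24)ℤ). -/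
/-- The monomial `q^a` in the group algebra `ℚ[q^ℚ]` of Puiseux polynomials. -/
noncomputable def Qpow (a : ℚ) : AddMonoidAlgebra ℚ ℚ := AddMonoidAlgebra.single a 1

/-- The coefficient series of the trefoil: `f_m = ε_m · q^{(m²+23)/24}` (which is `0`
when `ε_m = 0`, in particular for even `m`). -/
noncomputable def ftref (m : ℕ) : AddMonoidAlgebra ℚ ℚ :=
  AddMonoidAlgebra.single (((m : ℚ) ^ 2 + 23) / 24) ((trefEps m : ℚ))


lemma eps6 (m : ℕ) : trefEps (m + 6) = - trefEps m := by
  have h : m % 12 = 0 ∨ m % 12 = 1 ∨ m % 12 = 2 ∨ m % 12 = 3 ∨ m % 12 = 4 ∨ m % 12 = 5 ∨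
      m % 12 = 6 ∨ m % 12 = 7 ∨ m % 12 = 8 ∨ m % 12 = 9 ∨ m % 12 = 10 ∨ m % 12 = 11 := by omega
  have h6 : (m + 6) % 12 = (m % 12 + 6) % 12 := by omega
  rcases h with h|h|h|h|h|h|h|h|h|h|h|h <;> simp [trefEps, h6, h]

lemma QpowMul (a b : ℚ) : Qpow a * Qpow b = Qpow (a + b) := by
  simp [Qpow, AddMonoidAlgebra.single_mul_single]

lemma ftref_eq (n : ℕ) : ftref n = (trefEps n : ℚ) • Qpow (((n : ℚ) ^ 2 + 23) / 24) := by
  simp [ftref, Qpow, AddMonoidAlgebra.smul_single']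

/-- The closed-form coefficients of the trefoil series satisfy the quantum A-polynomial
recursion: for every odd `m ≥ 1`,
`(1 − q^{(m+9)/2}) f_{m+10}
  = q³ [ f_m (q^{(m+3)/2} − q^{m+2}) + f_{m+4} (q^{m+5} − q^{(m+1)/2})
        + f_{m+6} (1 − q^{(m+1)/2}) ]`
as an identity in the ring of Puiseux polynomials in `q`. -/
theorem trefoil_recursion (m : ℕ) (hm : Odd m) :
    (1 - Qpow (((m : ℚ) + 9)/2)) * ftref (m + 10)
      = Qpow 3 * (ftref m * (Qpow (((m : ℚ) + 3)/2) - Qpow ((m : ℚ) + 2))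
          + ftref (m + 4) * (Qpow ((m : ℚ) + 5) - Qpow (((m : ℚ) + 1)/2))
          + ftref (m + 6) * (1 - Qpow (((m : ℚ) + 1)/2))) := by
  have h6 : (trefEps (m + 6) : ℚ) = -(trefEps m : ℚ) := by rw [eps6]; push_cast; ring
  have h10 : (trefEps (m + 10) : ℚ) = -(trefEps (m + 4) : ℚ) := by
    have : m + 10 = (m + 4) + 6 := by ring
    rw [this, eps6]; push_cast; ring
  simp only [ftref_eq, h6, h10]
  push_cast
  simp only [mul_smul_comm, smul_mul_assoc, mul_sub, sub_mul, mul_add, mul_one, one_mul, QpowMul,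
    smul_sub, smul_add]
  ring_nf
  module
end

section
/- Invariance of the inverse-form pairing under edge blow-down: let M be an invertible symmetric integer s × s matrix, and suppose indices can be partitioned as {1,…,a} ∪ {a+1,…,s} such that M has exactly one nonzero off-diagonal entry connecting the two blocks, namely M_{a,a+1} = M_{a+1,a} = 1. Let M′ be the (s+1) × (s+1) matrix obtained by inserting a new index 0 between a and a+1 with M′_{00} = −1, M′_{a,0} = M′_{0,a} = M′_{0,a+1} = M′_{a+1,0} = 1, M′_{a,a+1} = M′_{a+1,a} = 0, M′_{a,a} = M_{a,a} − 1, M′_{a+1,a+1} = M_{a+1,a+1} − 1, and all other entries of M′ equal to the corresponding entries of M. Then M′ is invertible and, for every ℓ ∈ ℚˢ, setting ℓ′ ∈ ℚ^{s+1} to be ℓ with a 0 inserted at the new index, one has ⟨ℓ, M⁻¹ ℓ⟩ = ⟨ℓ′, (M′)⁻¹ ℓ′⟩. Moreover, if M⁻¹ℓ = w, then (M′)⁻¹ℓ′ is w with the entry w_a + w_{a+1} inserted at the new index. -/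
open Matrix

/-- Invariance of the inverse-form pairing under edge blow-down (0-indexed): `M` is an
invertible symmetric integer `s × s` matrix whose index set splits as
`{0,…,a−1} ∪ {a,…,s−1}` with exactly one nonzero cross entry `M (a−1) a = 1`.  The matrix
`N` on `s+1` indices is obtained by inserting a new index `v` (at position `a`, via the
embedding `e` of the old indices) with `N v v = −1`, `N` equal to `1` between `v` and the
two old indices `a−1`, `a`, with those two diagonal entries decreased by `1`, the cross
entry between the old indices `a−1` and `a` replaced by `0`, and all other entries of `N`
equal to the corresponding entries of `M`.  Then `N` is invertible, `⟨ℓ, M⁻¹ℓ⟩ = ⟨ℓ′, N⁻¹ℓ′⟩`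
for `ℓ′` equal to `ℓ` with a `0` inserted at `v`, and `N⁻¹ℓ′` is `w = M⁻¹ℓ` with the entry
`w (a−1) + w a` inserted at `v`. -/
theorem blowdown_inverse_pairing (s a : ℕ) (ha : 0 < a) (has : a < s)
    (M : Matrix (Fin s) (Fin s) ℚ)
    (hMint : ∀ i j, ∃ z : ℤ, M i j = (z : ℚ))
    (hMsymm : M.IsSymm)
    (hMdet : M.det ≠ 0)
    (hcross : ∀ i j : Fin s, (i : ℕ) < a → a ≤ (j : ℕ) →
      M i j = if (i : ℕ) = a - 1 ∧ (j : ℕ) = a then 1 else 0)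
    (N : Matrix (Fin (s+1)) (Fin (s+1)) ℚ)
    (e : Fin s → Fin (s+1))
    (he : ∀ i : Fin s, (e i : ℕ) = if (i : ℕ) < a then (i : ℕ) else (i : ℕ) + 1)
    (v : Fin (s+1)) (hv : (v : ℕ) = a)
    (hN0 : N v v = -1)
    (hN1 : ∀ i : Fin s, ((i : ℕ) = a - 1 ∨ (i : ℕ) = a) → N (e i) v = 1 ∧ N v (e i) = 1)
    (hN2 : ∀ i : Fin s, (i : ℕ) ≠ a - 1 → (i : ℕ) ≠ a → N (e i) v = 0 ∧ N v (e i) = 0)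
    (hNdiag : ∀ i : Fin s, ((i : ℕ) = a - 1 ∨ (i : ℕ) = a) → N (e i) (e i) = M i i - 1)
    (hNcross : ∀ i j : Fin s, (i : ℕ) = a - 1 → (j : ℕ) = a →
      N (e i) (e j) = 0 ∧ N (e j) (e i) = 0)
    (hNrest : ∀ i j : Fin s,
      ¬((i : ℕ) = a - 1 ∧ (j : ℕ) = a) → ¬((j : ℕ) = a - 1 ∧ (i : ℕ) = a) →
      ¬(i = j ∧ ((i : ℕ) = a - 1 ∨ (i : ℕ) = a)) →
      N (e i) (e j) = M i j) :
    N.det ≠ 0 ∧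
    ∀ (ℓ : Fin s → ℚ) (ℓ' : Fin (s+1) → ℚ),
      ℓ' v = 0 → (∀ i : Fin s, ℓ' (e i) = ℓ i) →
      ℓ ⬝ᵥ (M⁻¹).mulVec ℓ = ℓ' ⬝ᵥ (N⁻¹).mulVec ℓ' ∧
      (N⁻¹).mulVec ℓ' v =
        (M⁻¹).mulVec ℓ ⟨a - 1, by omega⟩ + (M⁻¹).mulVec ℓ ⟨a, has⟩ ∧
      ∀ i : Fin s, (N⁻¹).mulVec ℓ' (e i) = (M⁻¹).mulVec ℓ i := by
  have ha1 : a - 1 < s := by omega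
  have hs1 : ∀ k : Fin (s+1), (k : ℕ) < s + 1 := fun k => k.isLt
  set ia' : Fin s := ⟨a - 1, ha1⟩ with hia'
  set ia : Fin s := ⟨a, has⟩ with hia
  have hne : ia' ≠ ia := by
    simp only [hia', hia, Fin.mk.injEq, ne_eq]; omega
  have hev : ∀ i : Fin s, e i ≠ v := by
    intro i h
    have h1 : (e i : ℕ) = (v : ℕ) := congrArg Fin.val h
    rw [he i, hv] at h1
    split_ifs at h1 <;> omega
  have heinj : Function.Injective e := by
    intro i j h
    have h1 : (e i : ℕ) = (e j : ℕ) := congrArg Fin.val h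
    rw [he i, he j] at h1
    apply Fin.ext
    split_ifs at h1 <;> omega
  have hsurj : ∀ k : Fin (s+1), k = v ∨ ∃ i : Fin s, e i = k := by
    intro k
    by_cases hk : (k : ℕ) = a
    · left; apply Fin.ext; rw [hk, hv]
    · right
      by_cases hk2 : (k : ℕ) < a
      · refine ⟨⟨k, by omega⟩, Fin.ext ?_⟩
        rw [he]; simp only [hk2, if_pos]
      · have hk3 : a < (k : ℕ) := by omega
        have := k.isLt
        refine ⟨⟨(k : ℕ) - 1, by omega⟩, Fin.ext ?_⟩
        rw [he]
        simp only
        rw [if_neg (by omega)]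
        omega
  -- sum over Fin (s+1) splits as v plus range of e
  have hsum : ∀ f : Fin (s+1) → ℚ, ∑ k, f k = f v + ∑ i, f (e i) := by
    intro f
    have hbij : Function.Bijective (fun o : Option (Fin s) => o.elim v e) := by
      constructor
      · intro o1 o2 h
        match o1, o2 with
        | none, none => rfl
        | none, some j => exact absurd h.symm (hev j)
        | some i, none => exact absurd h (hev i)
        | some i, some j => exact congrArg some (heinj h)
      · intro k
        rcases hsurj k with h | ⟨i, h⟩
        · exact ⟨none, h.symm⟩
        · exact ⟨some i, h⟩
    rw [← Fintype.sum_bijective _ hbij (fun o => f (o.elim v e)) f (fun o => rfl)]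
    rw [Fintype.sum_option]
    rfl
  -- entry descriptions
  have hval' : (ia' : ℕ) = a - 1 := rfl
  have hval : (ia : ℕ) = a := rfl
  have hiei : ∀ i : Fin s, ((i : ℕ) = a - 1 ↔ i = ia') ∧ ((i : ℕ) = a ↔ i = ia) := by
    intro i
    constructor <;> constructor <;> intro h
    · exact Fin.ext h
    · rw [h]
    · exact Fin.ext h
    · rw [h]
  have hNv_e : ∀ i : Fin s, N v (e i) =
      (if i = ia' then 1 else 0) + (if i = ia then 1 else 0) := by
    intro i
    by_cases h1 : i = ia'
    · subst h1
      rw [if_pos rfl, if_neg hne, (hN1 ia' (Or.inl rfl)).2]; ring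
    · by_cases h2 : i = ia
      · subst h2
        rw [if_neg h1, if_pos rfl, (hN1 ia (Or.inr rfl)).2]; ring
      · rw [if_neg h1, if_neg h2,
          (hN2 i (fun h => h1 ((hiei i).1.1 h)) (fun h => h2 ((hiei i).2.1 h))).2]
        ring
  have hNe_v : ∀ i : Fin s, N (e i) v = if i = ia' ∨ i = ia then 1 else 0 := by
    intro i
    by_cases h1 : i = ia'
    · subst h1; rw [if_pos (Or.inl rfl), (hN1 ia' (Or.inl rfl)).1]
    · by_cases h2 : i = ia
      · subst h2; rw [if_pos (Or.inr rfl), (hN1 ia (Or.inr rfl)).1]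
      · rw [if_neg (by tauto),
          (hN2 i (fun h => h1 ((hiei i).1.1 h)) (fun h => h2 ((hiei i).2.1 h))).1]
  have hM1 : M ia' ia = 1 := by
    rw [hcross ia' ia (by omega) (by rw [hval])]
    rw [if_pos ⟨rfl, rfl⟩]
  have hM1' : M ia ia' = 1 := by
    have := congrFun (congrFun hMsymm ia') ia
    rw [Matrix.transpose_apply] at this
    rw [this, hM1]
  have hNee : ∀ i j : Fin s, N (e i) (e j) = M i j -
      (if i = ia' ∨ i = ia then
        (if j = ia' then 1 else 0) + (if j = ia then 1 else 0) else 0) := by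
    intro i j
    by_cases h1 : i = ia' ∨ i = ia
    · rw [if_pos h1]
      rcases h1 with h1 | h1 <;> subst h1
      · by_cases hj1 : j = ia'
        · subst hj1
          rw [if_pos rfl, if_neg hne, hNdiag ia' (Or.inl rfl)]; ring
        · by_cases hj2 : j = ia
          · subst hj2
            rw [if_neg (Ne.symm hne), if_pos rfl, (hNcross ia' ia rfl rfl).1, hM1]; ring
          · rw [if_neg hj1, if_neg hj2,
              hNrest ia' j (fun h => hj2 ((hiei j).2.1 h.2))
                (by rintro ⟨-, h⟩; rw [hval'] at h; omega)
                (by rintro ⟨h, -⟩; exact hj1 h.symm)]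
            ring
      · by_cases hj1 : j = ia'
        · subst hj1
          rw [if_pos rfl, if_neg hne, (hNcross ia' ia rfl rfl).2, hM1']; ring
        · by_cases hj2 : j = ia
          · subst hj2
            rw [if_neg hj1, if_pos rfl, hNdiag ia (Or.inr rfl)]; ring
          · rw [if_neg hj1, if_neg hj2,
              hNrest ia j (by rintro ⟨h, -⟩; rw [hval] at h; omega)
                (fun h => hj1 ((hiei j).1.1 h.1))
                (by rintro ⟨h, -⟩; exact hj2 h.symm)]
            ring
    · rw [if_neg h1]
      push_neg at h1
      rw [hNrest i j (fun h => h1.1 ((hiei i).1.1 h.1))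
          (fun h => h1.2 ((hiei i).2.1 h.2))
          (by rintro ⟨-, h | h⟩
              exacts [h1.1 ((hiei i).1.1 h), h1.2 ((hiei i).2.1 h)])]
      ring
  -- row formulas
  have hrowv : ∀ x : Fin (s+1) → ℚ,
      N.mulVec x v = -(x v) + (x (e ia') + x (e ia)) := by
    intro x
    simp only [Matrix.mulVec, dotProduct]
    rw [hsum (fun j => N v j * x j)]
    simp only [hN0]
    have hterm : ∀ i : Fin s, N v (e i) * x (e i) =
        (if i = ia' then x (e ia') else 0) + (if i = ia then x (e ia) else 0) := by
      intro i
      rw [hNv_e i]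
      by_cases h1 : i = ia'
      · subst h1; rw [if_pos rfl, if_pos rfl, if_neg hne, if_neg hne]; ring
      · by_cases h2 : i = ia
        · subst h2; rw [if_neg h1, if_pos rfl, if_neg h1, if_pos rfl]; ring
        · rw [if_neg h1, if_neg h2, if_neg h1, if_neg h2]; ring
    rw [Finset.sum_congr rfl (fun i _ => hterm i), Finset.sum_add_distrib,
      Finset.sum_ite_eq' Finset.univ ia' (fun _ => x (e ia')),
      Finset.sum_ite_eq' Finset.univ ia (fun _ => x (e ia))]
    simp only [Finset.mem_univ, if_pos]
    ring
  have hrowe : ∀ (x : Fin (s+1) → ℚ) (i : Fin s),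
      N.mulVec x (e i) = M.mulVec (fun j => x (e j)) i +
        (if i = ia' ∨ i = ia then x v - (x (e ia') + x (e ia)) else 0) := by
    intro x i
    simp only [Matrix.mulVec, dotProduct]
    rw [hsum (fun j => N (e i) j * x j)]
    simp only [hNe_v i, hNee i]
    by_cases h1 : i = ia' ∨ i = ia
    · rw [if_pos h1]
      simp only [h1, if_pos, if_true]
      have hterm : ∀ j : Fin s,
          (M i j - ((if j = ia' then 1 else 0) + (if j = ia then 1 else 0))) * x (e j) =
          M i j * x (e j) - ((if j = ia' then x (e ia') else 0) +
            (if j = ia then x (e ia) else 0)) := by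
        intro j
        by_cases hj1 : j = ia'
        · subst hj1; rw [if_pos rfl, if_pos rfl, if_neg hne, if_neg hne]; ring
        · by_cases hj2 : j = ia
          · subst hj2; rw [if_neg hj1, if_pos rfl, if_neg hj1, if_pos rfl]; ring
          · rw [if_neg hj1, if_neg hj2, if_neg hj1, if_neg hj2]; ring
      rw [Finset.sum_congr rfl (fun j _ => hterm j), Finset.sum_sub_distrib,
        Finset.sum_add_distrib,
        Finset.sum_ite_eq' Finset.univ ia' (fun _ => x (e ia')),
        Finset.sum_ite_eq' Finset.univ ia (fun _ => x (e ia))]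
      simp only [Finset.mem_univ, if_pos]
      ring
    · rw [if_neg h1, if_neg h1]
      simp only [h1, if_neg, if_false]
      ring_nf
  have hMunit : IsUnit M.det := isUnit_iff_ne_zero.mpr hMdet
  have hMinj : ∀ y : Fin s → ℚ, M.mulVec y = 0 → y = 0 := by
    intro y hy
    by_contra h
    exact hMdet (Matrix.exists_mulVec_eq_zero_iff.mp ⟨y, h, hy⟩)
  -- determinant of N
  have hNdet : N.det ≠ 0 := by
    intro hdet
    obtain ⟨x, hx0, hx⟩ := Matrix.exists_mulVec_eq_zero_iff.mpr hdet
    have hxv : x v = x (e ia') + x (e ia) := by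
      have := hrowv x
      rw [hx] at this
      simp only [Pi.zero_apply] at this
      linarith
    have hxe : (fun j => x (e j)) = 0 := by
      apply hMinj
      funext i
      have := hrowe x i
      rw [hx] at this
      simp only [Pi.zero_apply] at this
      rw [hxv] at this
      simp only [sub_self, if_pos, ite_self] at this
      simpa using this.symm
    have hxe' : ∀ j : Fin s, x (e j) = 0 := fun j => congrFun hxe j
    apply hx0
    funext k
    rcases hsurj k with h | ⟨i, h⟩
    · subst h; simp [hxv, hxe' ia', hxe' ia]
    · subst h; simp [hxe' i]
  refine ⟨hNdet, ?_⟩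
  have hNunit : IsUnit N.det := isUnit_iff_ne_zero.mpr hNdet
  intro ℓ ℓ' hv0 hℓ'
  set w : Fin s → ℚ := (M⁻¹).mulVec ℓ with hw
  have hMw : M.mulVec w = ℓ := by
    rw [hw, Matrix.mulVec_mulVec, Matrix.mul_nonsing_inv M hMunit, Matrix.one_mulVec]
  set w' : Fin (s+1) → ℚ := fun k =>
    if hk : (k : ℕ) = a then w ia' + w ia
    else if hk2 : (k : ℕ) < a then w ⟨k, by omega⟩
    else w ⟨(k : ℕ) - 1, by have := k.isLt; omega⟩ with hw'
  have hw'v : w' v = w ia' + w ia := by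
    rw [hw']; simp only [hv, dif_pos]
  have hw'e : ∀ i : Fin s, w' (e i) = w i := by
    intro i
    rw [hw']
    simp only
    by_cases hi : (i : ℕ) < a
    · have hei : (e i : ℕ) = (i : ℕ) := by rw [he]; simp [hi]
      rw [dif_neg (by omega), dif_pos (by omega)]
      congr 1
      exact Fin.ext hei
    · have hei : (e i : ℕ) = (i : ℕ) + 1 := by rw [he]; simp [hi]
      rw [dif_neg (by omega), dif_neg (by omega)]
      congr 1
      apply Fin.ext
      simp only
      omega
  have hNw' : N.mulVec w' = ℓ' := by
    funext k
    rcases hsurj k with h | ⟨i, h⟩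
    · subst h
      rw [hrowv w', hw'v, hw'e, hw'e, hv0]; ring
    · subst h
      rw [hrowe w' i, hℓ' i]
      have : (fun j => w' (e j)) = w := funext hw'e
      rw [this, hMw, hw'v, hw'e, hw'e]
      simp only [sub_self, ite_self]
      ring
  have hinv : (N⁻¹).mulVec ℓ' = w' := by
    rw [← hNw', Matrix.mulVec_mulVec, Matrix.nonsing_inv_mul N hNunit, Matrix.one_mulVec]
  refine ⟨?_, ?_, ?_⟩
  · rw [hinv]
    simp only [dotProduct]
    rw [hsum (fun k => ℓ' k * w' k), hv0]
    have hcong : ∀ i ∈ Finset.univ, ℓ' (e i) * w' (e i) = ℓ i * w i :=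
      fun i _ => by rw [hℓ' i, hw'e i]
    rw [Finset.sum_congr rfl hcong]
    ring
  · rw [hinv, hw'v]
  · intro i
    rw [hinv, hw'e i]
end

section
/- Boundedness for degenerate negative semi-definite forms: let M be a real symmetric s × s matrix with nontrivial kernel such that the restriction of the quadratic form v ↦ vᵀMv to the coordinate hyperplane {v : v_s = 0} is negative definite. Then for every fixed vector b ∈ ℝˢ, the function n ↦ nᵀMn + nᵀMb is bounded above on ℝˢ. -/
/-!
A kernel vector `u₀` of `M` cannot lie in the hyperplane `{v | v_last = 0}`, on which the form is
negative definite, so every `u` splits as `v + t • u₀` with `v` in that hyperplane. As `M` is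
symmetric and `M u₀ = 0`, the form does not see the `u₀`-component, hence `M` is negative
semidefinite. Completing the square then bounds `uᵀMu + uᵀMb` by `-bᵀMb / 4`.
-/

open Matrix

namespace Matrix.IsSymm

section CommRing

variable {ι R : Type*} [Fintype ι] [CommRing R] {M : Matrix ι ι R}

theorem dotProduct_mulVec_comm (hM : M.IsSymm) (u v : ι → R) :
    u ⬝ᵥ M *ᵥ v = v ⬝ᵥ M *ᵥ u := by
  rw [dotProduct_mulVec, ← mulVec_transpose, hM.eq, dotProduct_comm]

theorem dotProduct_mulVec_add_of_mulVec_eq_zero (hM : M.IsSymm) (v : ι → R) {w : ι → R}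
    (hw : M *ᵥ w = 0) :
    (v + w) ⬝ᵥ M *ᵥ (v + w) = v ⬝ᵥ M *ᵥ v := by
  rw [mulVec_add, hw, add_zero, add_dotProduct, hM.dotProduct_mulVec_comm w, hw,
    dotProduct_zero, add_zero]

end CommRing

theorem dotProduct_mulVec_nonpos_of_mulVec_eq_zero {ι R : Type*} [Fintype ι] [Field R] [LE R]
    {M : Matrix ι ι R} (hM : M.IsSymm) {i : ι} {u₀ : ι → R}
    (hMu₀ : M *ᵥ u₀ = 0) (hu₀ : u₀ i ≠ 0)
    (hhyperplane : ∀ v, v i = 0 → v ⬝ᵥ M *ᵥ v ≤ 0) (u : ι → R) :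
    u ⬝ᵥ M *ᵥ u ≤ 0 := by
  set v := u - (u i / u₀ i) • u₀
  have hvi : v i = 0 := by simp [v, hu₀]
  have hu : u = v + (u i / u₀ i) • u₀ := by simp [v]
  rw [hu, hM.dotProduct_mulVec_add_of_mulVec_eq_zero v (by rw [mulVec_smul, hMu₀, smul_zero])]
  exact hhyperplane v hvi

theorem dotProduct_mulVec_add_le {ι R : Type*} [Fintype ι] [Field R] [LinearOrder R]
    [IsStrictOrderedRing R] {M : Matrix ι ι R} (hM : M.IsSymm) (hnonpos : ∀ u, u ⬝ᵥ M *ᵥ u ≤ 0)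
    (b u : ι → R) :
    u ⬝ᵥ M *ᵥ u + u ⬝ᵥ M *ᵥ b ≤ -(b ⬝ᵥ M *ᵥ b) / 4 := by
  have hsq := hnonpos (u + (2 : R)⁻¹ • b)
  simp only [mulVec_add, mulVec_smul, add_dotProduct, dotProduct_add, smul_dotProduct,
    dotProduct_smul, smul_eq_mul, hM.dotProduct_mulVec_comm b u] at hsq
  linarith

end Matrix.IsSymm

/-- Boundedness for degenerate negative semi-definite forms: if `M` is a real symmetric
matrix with nontrivial kernel whose quadratic form is negative definite on the coordinate
hyperplane where the last coordinate vanishes, then for every fixed `b` the function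
`n ↦ nᵀMn + nᵀMb` is bounded above. -/
theorem bddAbove_of_degenerate_negSemidef (n : ℕ)
    (M : Matrix (Fin (n+1)) (Fin (n+1)) ℝ)
    (hsymm : M.IsSymm)
    (hker : ∃ u : Fin (n+1) → ℝ, u ≠ 0 ∧ M.mulVec u = 0)
    (hneg : ∀ u : Fin (n+1) → ℝ, u ≠ 0 → u (Fin.last n) = 0 → u ⬝ᵥ M.mulVec u < 0)
    (b : Fin (n+1) → ℝ) :
    ∃ C : ℝ, ∀ u : Fin (n+1) → ℝ, u ⬝ᵥ M.mulVec u + u ⬝ᵥ M.mulVec b ≤ C := by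
  obtain ⟨u₀, hu₀, hMu₀⟩ := hker
  have hlast : u₀ (Fin.last n) ≠ 0 := fun h => by
    simpa [hMu₀] using hneg u₀ hu₀ h
  have hhyperplane : ∀ v : Fin (n+1) → ℝ, v (Fin.last n) = 0 → v ⬝ᵥ M *ᵥ v ≤ 0 := by
    intro v hv
    rcases eq_or_ne v 0 with rfl | hv0
    · simp
    · exact (hneg v hv0 hv).le
  exact ⟨_, hsymm.dotProduct_mulVec_add_le
    (hsymm.dotProduct_mulVec_nonpos_of_mulVec_eq_zero hMu₀ hlast hhyperplane) b⟩
end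

section
/- Boundedness for weakly negative definite matrices: let M be an invertible symmetric real s × s matrix and S ⊆ {1, …, s} a subset such that the quadratic form v ↦ vᵀ M⁻¹ v is negative definite on the coordinate subspace V_S = {v : v_i = 0 for i ∉ S}. Then for any fixed values (c_i)_{i ∉ S}, the function ℓ ↦ −ℓᵀ M⁻¹ ℓ is bounded below on the affine set { ℓ ∈ ℝˢ : ℓ_i = c_i for all i ∉ S }, and moreover for each real C, the set of integer vectors ℓ ∈ ℤˢ in this affine set with −ℓᵀM⁻¹ℓ ≤ C is finite. -/
open Matrix

private lemma dot_abs_le' (s : ℕ) (u z : Fin s → ℝ) : |u ⬝ᵥ z| ≤ (s : ℝ) * ‖u‖ * ‖z‖ := by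
  calc |u ⬝ᵥ z| ≤ ∑ i, |u i * z i| := Finset.abs_sum_le_sum_abs _ _
    _ ≤ ∑ _i : Fin s, ‖u‖ * ‖z‖ := by
        refine Finset.sum_le_sum fun i _ => ?_
        rw [abs_mul]
        exact mul_le_mul (norm_le_pi_norm u i) (norm_le_pi_norm z i) (abs_nonneg _) (norm_nonneg _)
    _ = (s : ℝ) * ‖u‖ * ‖z‖ := by simp [mul_assoc]

private lemma coer_aux' (s : ℕ) (N : Matrix (Fin s) (Fin s) ℝ) (S : Finset (Fin s))
    (hneg : ∀ u : Fin s → ℝ, u ≠ 0 → (∀ i ∉ S, u i = 0) → u ⬝ᵥ N.mulVec u < 0) :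
    ∃ α > 0, ∀ u : Fin s → ℝ, (∀ i ∉ S, u i = 0) → α * ‖u‖ ^ 2 ≤ -(u ⬝ᵥ N.mulVec u) := by
  have hcont : Continuous fun u : Fin s → ℝ => -(u ⬝ᵥ N.mulVec u) := by
    refine Continuous.neg ?_
    simp only [dotProduct, Matrix.mulVec]
    exact continuous_finset_sum _ fun i _ => (continuous_apply i).mul
      (continuous_finset_sum _ fun j _ => continuous_const.mul (continuous_apply j))
  set K : Set (Fin s → ℝ) := {u | ‖u‖ = 1 ∧ ∀ i ∉ S, u i = 0} with hKdef
  have hscale : ∀ (r : ℝ) (u : Fin s → ℝ), (r • u) ⬝ᵥ N.mulVec (r • u) = r ^ 2 * (u ⬝ᵥ N.mulVec u) := by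
    intro r u
    rw [Matrix.mulVec_smul, smul_dotProduct, dotProduct_smul]
    simp [smul_eq_mul]; ring
  have hmemK : ∀ u : Fin s → ℝ, u ≠ 0 → (∀ i ∉ S, u i = 0) → (‖u‖⁻¹ • u) ∈ K := by
    intro u hu hu0
    refine ⟨norm_smul_inv_norm hu, fun i hi => ?_⟩
    simp [hu0 i hi]
  rcases Set.eq_empty_or_nonempty K with hKe | hKne
  · refine ⟨1, one_pos, fun u hu => ?_⟩
    have : u = 0 := by
      by_contra h
      exact Set.notMem_empty _ (hKe ▸ hmemK u h hu)
    simp [this]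
  · have hKclosed : IsClosed K := by
      have : K = {u : Fin s → ℝ | ‖u‖ = 1} ∩ ⋂ i, ⋂ (_ : i ∉ S), {u | u i = 0} := by
        ext u; simp [hKdef, Set.mem_iInter]
      rw [this]
      exact (isClosed_eq continuous_norm continuous_const).inter
        (isClosed_iInter fun i => isClosed_iInter fun _ =>
          isClosed_eq (continuous_apply i) continuous_const)
    have hKbdd : Bornology.IsBounded K := by
      refine (Metric.isBounded_closedBall (x := (0 : Fin s → ℝ)) (r := 1)).subset fun u hu => ?_
      simp [Metric.mem_closedBall, hu.1.le, dist_eq_norm, hu.1]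
    have hKcpt : IsCompact K := Metric.isCompact_of_isClosed_isBounded hKclosed hKbdd
    obtain ⟨u₀, hu₀K, hu₀min⟩ := hKcpt.exists_isMinOn hKne hcont.continuousOn
    have hu₀ne : u₀ ≠ 0 := fun h => by
      have := hu₀K.1
      rw [h, norm_zero] at this
      exact one_ne_zero this.symm
    have hα : 0 < -(u₀ ⬝ᵥ N.mulVec u₀) := by
      have := hneg u₀ hu₀ne hu₀K.2; linarith
    refine ⟨_, hα, fun u hu => ?_⟩
    rcases eq_or_ne u 0 with rfl | hune
    · simp
    · have hv := hmemK u hune hu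
      have h1 := hu₀min hv
      have hnorm : 0 < ‖u‖ := norm_pos_iff.mpr hune
      have h2 : (‖u‖⁻¹ • u) ⬝ᵥ N.mulVec (‖u‖⁻¹ • u) = ‖u‖⁻¹ ^ 2 * (u ⬝ᵥ N.mulVec u) := hscale _ _
      simp only [Set.mem_setOf_eq] at h1
      rw [h2] at h1
      have h4 : ‖u‖⁻¹ ^ 2 * (u ⬝ᵥ N.mulVec u) * ‖u‖ ^ 2 = u ⬝ᵥ N.mulVec u := by
        field_simp
      have h5 := mul_le_mul_of_nonneg_right h1 (sq_nonneg ‖u‖)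
      linarith

/-- Boundedness for weakly negative definite matrices: if `M` is an invertible symmetric
real matrix and `M⁻¹` is negative definite on the coordinate subspace of a set `S` of
indices, then on the affine set of vectors with prescribed coordinates off `S` the
function `ℓ ↦ −ℓᵀ M⁻¹ ℓ` is bounded below, and for each `C` only finitely many integer
vectors in this affine set satisfy `−ℓᵀ M⁻¹ ℓ ≤ C`. -/
theorem weakly_negative_definite_bounds (s : ℕ) (M : Matrix (Fin s) (Fin s) ℝ)
    (hsymm : M.IsSymm) (hdet : M.det ≠ 0) (S : Finset (Fin s))
    (hneg : ∀ u : Fin s → ℝ, u ≠ 0 → (∀ i ∉ S, u i = 0) → u ⬝ᵥ (M⁻¹).mulVec u < 0)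
    (c : Fin s → ℝ) :
    (∃ B : ℝ, ∀ ℓ : Fin s → ℝ, (∀ i ∉ S, ℓ i = c i) →
      B ≤ -(ℓ ⬝ᵥ (M⁻¹).mulVec ℓ)) ∧
    ∀ C : ℝ, {ℓ : Fin s → ℤ | (∀ i ∉ S, (ℓ i : ℝ) = c i) ∧
      -((fun i => (ℓ i : ℝ)) ⬝ᵥ (M⁻¹).mulVec (fun i => (ℓ i : ℝ))) ≤ C}.Finite := by
  set N := M⁻¹ with hN
  clear_value N
  have hNsymm : Nᵀ = N := by rw [hN, Matrix.transpose_nonsing_inv, hsymm.eq]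
  have hdotsymm : ∀ v w : Fin s → ℝ, v ⬝ᵥ N.mulVec w = w ⬝ᵥ N.mulVec v := by
    intro v w
    rw [Matrix.dotProduct_mulVec, ← Matrix.mulVec_transpose, hNsymm, dotProduct_comm]
  obtain ⟨α, hα, hcoer⟩ := coer_aux' s N S hneg
  set w : Fin s → ℝ := fun i => if i ∈ S then 0 else c i with hw
  clear_value w
  set b : ℝ := (s : ℝ) * ‖N.mulVec w‖ with hbdef
  clear_value b
  have hb0 : 0 ≤ b := by rw [hbdef]; positivity
  set d : ℝ := |w ⬝ᵥ N.mulVec w| with hddef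
  clear_value d
  have hd0 : 0 ≤ d := by rw [hddef]; positivity
  -- expansion and key estimate
  have hkey : ∀ ℓ : Fin s → ℝ, (∀ i ∉ S, ℓ i = c i) →
      α * ‖ℓ - w‖ ^ 2 - 2 * b * ‖ℓ - w‖ - d ≤ -(ℓ ⬝ᵥ N.mulVec ℓ) := by
    intro ℓ hℓ
    set u := ℓ - w with hu
    clear_value u
    have huS : ∀ i ∉ S, u i = 0 := by
      intro i hi
      simp [hu, hw, hℓ i hi, if_neg hi]
    have hexp : ℓ ⬝ᵥ N.mulVec ℓ =
        u ⬝ᵥ N.mulVec u + 2 * (u ⬝ᵥ N.mulVec w) + w ⬝ᵥ N.mulVec w := by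
      have : ℓ = u + w := by simp [hu]
      rw [this, Matrix.mulVec_add, dotProduct_add, add_dotProduct,
        add_dotProduct, hdotsymm w u]
      ring
    have h1 := hcoer u huS
    have h2 : |u ⬝ᵥ N.mulVec w| ≤ b * ‖u‖ := by
      have := dot_abs_le' s u (N.mulVec w)
      rw [hbdef]; nlinarith [norm_nonneg u]
    have h3 : -(u ⬝ᵥ N.mulVec w) ≤ b * ‖u‖ := by
      have := neg_abs_le (u ⬝ᵥ N.mulVec w); linarith
    have h3' : u ⬝ᵥ N.mulVec w ≤ b * ‖u‖ := le_of_abs_le h2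
    have h4 : -(w ⬝ᵥ N.mulVec w) ≤ d := by
      have := neg_abs_le (w ⬝ᵥ N.mulVec w); rw [hddef]; linarith
    have h4' : w ⬝ᵥ N.mulVec w ≤ d := hddef ▸ le_abs_self _
    rw [hexp]
    linarith
  have hquad : ∀ t : ℝ, 0 ≤ t → -(b ^ 2 / α) - d ≤ α * t ^ 2 - 2 * b * t - d := by
    intro t ht
    have hx : α * (b ^ 2 / α) = b ^ 2 := by field_simp
    nlinarith [sq_nonneg (α * t - b), hα]
  constructor
  · refine ⟨-(b ^ 2 / α) - d, fun ℓ hℓ => ?_⟩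
    exact le_trans (hquad ‖ℓ - w‖ (norm_nonneg _)) (hkey ℓ hℓ)
  · intro C
    set R : ℝ := (2 * b + |C| + d) / α + 1 with hRdef
    clear_value R
    set K0 : ℝ := R + ‖w‖ with hK0
    clear_value K0
    refine Set.Finite.subset (Set.Finite.pi (fun i : Fin s => Set.finite_Icc (-⌈K0⌉) ⌈K0⌉)) ?_
    intro ℓ hℓ
    obtain ⟨hℓc, hℓC⟩ := hℓ
    set ℓr : Fin s → ℝ := fun i => (ℓ i : ℝ) with hℓr
    clear_value ℓr
    have hℓc' : ∀ i ∉ S, ℓr i = c i := by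
      intro i hi; rw [hℓr]; exact hℓc i hi
    have hkey2 := hkey ℓr hℓc'
    have hle : α * ‖ℓr - w‖ ^ 2 - 2 * b * ‖ℓr - w‖ - d ≤ C := le_trans hkey2 hℓC
    -- bound ‖ℓr - w‖ ≤ R
    have htR : ‖ℓr - w‖ ≤ R := by
      by_contra h
      push_neg at h
      set t := ‖ℓr - w‖ with htdef
      clear_value t
      have ht0 : 0 ≤ t := htdef ▸ norm_nonneg _
      have hαR : α * R = 2 * b + |C| + d + α := by
        rw [hRdef]; field_simp
      have hR1 : 1 ≤ R := by nlinarith [abs_nonneg C]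
      have h3 : α * R * t ≤ α * t * t :=
        mul_le_mul_of_nonneg_right (mul_le_mul_of_nonneg_left h.le hα.le) ht0
      have ht1 : 1 ≤ t := le_trans hR1 h.le
      have hCabs : C ≤ |C| := le_abs_self C
      nlinarith [mul_le_mul_of_nonneg_left ht1 (abs_nonneg C),
        mul_le_mul_of_nonneg_left ht1 hd0, mul_le_mul_of_nonneg_left ht1 hα.le,
        mul_le_mul_of_nonneg_left ht1 hb0]
    -- bound coordinates
    have hnorm : ‖ℓr‖ ≤ K0 := by
      have : ℓr = (ℓr - w) + w := by ring
      calc ‖ℓr‖ = ‖(ℓr - w) + w‖ := by rw [← this]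
        _ ≤ ‖ℓr - w‖ + ‖w‖ := norm_add_le _ _
        _ ≤ R + ‖w‖ := by linarith
        _ = K0 := hK0.symm
    intro i _
    have hi : |(ℓ i : ℝ)| ≤ K0 := by
      have h := le_trans (norm_le_pi_norm ℓr i) hnorm
      rw [hℓr] at h
      exact h
    have hi2 : (|ℓ i| : ℝ) ≤ (⌈K0⌉ : ℝ) := by
      push_cast
      exact le_trans hi (Int.le_ceil K0)
    have hi3 : |ℓ i| ≤ ⌈K0⌉ := by exact_mod_cast hi2
    rw [abs_le] at hi3
    exact ⟨hi3.1, hi3.2⟩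
end
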